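/- Let H = {h_1,...,h_m} be a partition of the index set {1,...,n}, and define S_H(D) to be the sequence of sums y_i = Σ_{j ∈ h_i} x_j where ⟨x_1,...,x_n⟩ is the sorted sequence of the multiset D of reals in [0,1]. Then for any two replacement-neighboring multisets D1 and D2, ‖S_H(D1) − S_H(D2)‖_1 ≤ 1. -/

import Mathlib

/-!
Write `D₁ = u ::ₘ s` and `D₂ = v ::ₘ s`, and say `u ≤ v`. Inserting the larger value `v` into the
sorted list of `s` instead of `u` can only raise every order statistic, so the sorted sequences
satisfy `p j ≤ q j` coordinatewise. Hence every group difference is nonnegative, and since the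
groups are disjoint, their sum is at most the total difference `∑ j, (q j - p j) = v - u ≤ 1`.
-/

namespace List

variable {α : Type*} [LinearOrder α]

theorem forall₂_le_orderedInsert_of_le {u v : α} (huv : u ≤ v) :
    ∀ l : List α, l.Pairwise (· ≤ ·) →
      Forall₂ (· ≤ ·) (l.orderedInsert (· ≤ ·) u) (l.orderedInsert (· ≤ ·) v)
  | [], _ => by simpa using huv
  | b :: l, hl => by
    by_cases hvb : v ≤ b
    · simpa [hvb, huv.trans hvb] using huv
    by_cases hub : u ≤ b
    · -- `u :: b :: l` against `b :: l.orderedInsert v`: the tails compare by induction,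
      -- with `b ≤ v` in place of `u ≤ v`, since `b :: l = l.orderedInsert b`
      have hb : l.orderedInsert (· ≤ ·) b = b :: l := by
        cases l with
        | nil => rfl
        | cons c l => exact orderedInsert_cons_of_le _ _ (rel_of_pairwise_cons hl mem_cons_self)
      simp only [orderedInsert_cons, hub, hvb, if_true, if_false]
      exact .cons hub (hb ▸ forall₂_le_orderedInsert_of_le (not_le.mp hvb).le l hl.of_cons)
    · simpa [hub, hvb] using forall₂_le_orderedInsert_of_le huv l hl.of_cons

end List

namespace Multiset

variable {α : Type*} [LinearOrder α]

theorem sort_cons_eq_orderedInsert (a : α) (s : Multiset α) :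
    (a ::ₘ s).sort (· ≤ ·) = (s.sort (· ≤ ·)).orderedInsert (· ≤ ·) a := by
  refine List.Perm.eq_of_pairwise' (pairwise_sort _ _)
    ((pairwise_sort _ _).orderedInsert _ _) ?_
  rw [← coe_eq_coe, sort_eq, coe_eq_coe.mpr (List.perm_orderedInsert _ _ _), ← cons_coe, sort_eq]

theorem forall₂_le_sort_cons_of_le {u v : α} (huv : u ≤ v) (s : Multiset α) :
    List.Forall₂ (· ≤ ·) ((u ::ₘ s).sort (· ≤ ·)) ((v ::ₘ s).sort (· ≤ ·)) := by
  rw [sort_cons_eq_orderedInsert, sort_cons_eq_orderedInsert]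
  exact List.forall₂_le_orderedInsert_of_le huv _ (pairwise_sort _ _)

end Multiset

open Function in
theorem Finset.sum_sum_le_sum_of_pairwise_disjoint {ι κ M : Type*} [Fintype κ] [AddCommMonoid M]
    [PartialOrder M] [IsOrderedAddMonoid M] {f : κ → M} (hf : ∀ j, 0 ≤ f j) {H : ι → Finset κ}
    (hH : Pairwise (Disjoint on H)) (s : Finset ι) :
    ∑ i ∈ s, ∑ j ∈ H i, f j ≤ ∑ j, f j := by
  classical
  rw [← sum_biUnion (hH.set_pairwise _)]
  exact sum_le_univ_sum_of_nonneg hf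

section SortedCoordinates

open Function

variable {α : Type*} [LinearOrder α] {n : ℕ} {p q : Fin n → α}

theorem sum_eq_of_ofFn_eq_sort [AddCommMonoid α] {s : Multiset α} (hp : List.ofFn p = s.sort (· ≤ ·)) :
    ∑ j, p j = s.sum := by
  rw [← List.sum_ofFn, hp, ← Multiset.sum_coe, Multiset.sort_eq]

theorem le_of_ofFn_eq_sort_cons {s : Multiset α} {u v : α} (huv : u ≤ v)
    (hp : List.ofFn p = (u ::ₘ s).sort (· ≤ ·)) (hq : List.ofFn q = (v ::ₘ s).sort (· ≤ ·))
    (j : Fin n) : p j ≤ q j := by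
  have h := Multiset.forall₂_le_sort_cons_of_le huv s
  rw [← hp, ← hq] at h
  simpa using h.get (i := j) (by simp) (by simp)

theorem sum_abs_sum_sub_le_abs_sub_of_sort_cons [AddCommGroup α] [IsOrderedAddMonoid α]
    {ι : Type*} [Fintype ι] (H : ι → Finset (Fin n)) (hH : Pairwise (Disjoint on H))
    (s : Multiset α) (u v : α)
    (hp : List.ofFn p = (u ::ₘ s).sort (· ≤ ·)) (hq : List.ofFn q = (v ::ₘ s).sort (· ≤ ·)) :
    ∑ i, |∑ j ∈ H i, q j - ∑ j ∈ H i, p j| ≤ |v - u| := by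
  wlog huv : u ≤ v generalizing u v p q
  · simpa only [abs_sub_comm] using this v u hq hp (le_of_not_ge huv)
  have hpq := le_of_ofFn_eq_sort_cons huv hp hq
  calc ∑ i, |∑ j ∈ H i, q j - ∑ j ∈ H i, p j| = ∑ i, ∑ j ∈ H i, (q j - p j) := by
        refine Finset.sum_congr rfl fun i _ => ?_
        rw [← Finset.sum_sub_distrib]
        exact abs_of_nonneg (Finset.sum_nonneg fun j _ => sub_nonneg.mpr (hpq j))
    _ ≤ ∑ j, (q j - p j) :=
        Finset.sum_sum_le_sum_of_pairwise_disjoint (fun j => sub_nonneg.mpr (hpq j)) hH _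
    _ = v - u := by
        rw [Finset.sum_sub_distrib, sum_eq_of_ofFn_eq_sort hp, sum_eq_of_ofFn_eq_sort hq,
          Multiset.sum_cons, Multiset.sum_cons, add_sub_add_right_eq_sub]
    _ ≤ |v - u| := le_abs_self _

end SortedCoordinates

theorem stmt_3_general (n m : ℕ) (H : Fin m → Finset (Fin n))
    (hdisj : ∀ i j, i ≠ j → Disjoint (H i) (H j))
    (D1 D2 : Multiset ℝ) (u v : ℝ)
    (hD1 : ∀ a ∈ D1, a ∈ Set.Icc (0:ℝ) 1)
    (hD2 : ∀ a ∈ D2, a ∈ Set.Icc (0:ℝ) 1)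
    (hu : u ∈ D1) (hrep : D2 = D1.erase u + {v})
    (p q : Fin n → ℝ)
    (hp : List.ofFn p = D1.sort (· ≤ ·))
    (hq : List.ofFn q = D2.sort (· ≤ ·)) :
    ∑ i : Fin m, |(∑ j ∈ H i, q j) - ∑ j ∈ H i, p j| ≤ 1 := by
  have hD1_eq : D1 = u ::ₘ D1.erase u := (Multiset.cons_erase hu).symm
  have hD2_eq : D2 = v ::ₘ D1.erase u := by rw [hrep, add_comm, Multiset.singleton_add]
  have hu01 := hD1 u hu
  have hv01 := hD2 v (by simp [hD2_eq])
  rw [hD1_eq] at hp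
  rw [hD2_eq] at hq
  refine (sum_abs_sum_sub_le_abs_sub_of_sort_cons H hdisj _ u v hp hq).trans ?_
  rw [abs_sub_le_iff]
  constructor <;> linarith [hu01.1, hu01.2, hv01.1, hv01.2]

/-- Group sums over any partition of the sorted sequence have sensitivity at most 1
w.r.t. replacement neighbors. -/
theorem stmt_3 (n m : ℕ) (H : Fin m → Finset (Fin n))
    (hdisj : ∀ i j, i ≠ j → Disjoint (H i) (H j))
    (hcover : ∀ a : Fin n, ∃ i, a ∈ H i)
    (D1 D2 : Multiset ℝ) (u v : ℝ)
    (hD1 : ∀ a ∈ D1, a ∈ Set.Icc (0:ℝ) 1)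
    (hD2 : ∀ a ∈ D2, a ∈ Set.Icc (0:ℝ) 1)
    (hu : u ∈ D1) (hrep : D2 = D1.erase u + {v})
    (p q : Fin n → ℝ)
    (hp : List.ofFn p = D1.sort (· ≤ ·))
    (hq : List.ofFn q = D2.sort (· ≤ ·)) :
    ∑ i : Fin m, |(∑ j ∈ H i, q j) - ∑ j ∈ H i, p j| ≤ 1 :=
  stmt_3_general n m H hdisj D1 D2 u v hD1 hD2 hu hrep p q hp hq
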